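/- The following are equivalent properties of a metric interval X (a metric space homeomorphic to a nontrivial interval of ℝ): (i) X has bounded turning; (ii) X admits a Lipschitz mixer; (iii) X admits a symmetric Lipschitz mixer, i.e., a Lipschitz mixer σ with σ(a,b,c) invariant under all permutations of (a,b,c). -/
import Mathlib

noncomputable def medR (a b c : ℝ) : ℝ := max (min a b) (max (min a c) (min b c))

lemma medR_comm1 (a b c : ℝ) : medR a b c = medR b a c := by
  unfold medR; rw [min_comm a b, max_comm (min a c) (min b c)]

lemma medR_comm2 (a b c : ℝ) : medR a b c = medR a c b := by
  unfold medR; rw [min_comm c b, max_left_comm]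

lemma medR_idem (a b : ℝ) : medR a a b = a := by
  simp [medR]

lemma medR_cases (a b c : ℝ) : medR a b c = a ∨ medR a b c = b ∨ medR a b c = c := by
  unfold medR
  rcases le_total a b with h1|h1 <;> rcases le_total a c with h2|h2 <;>
    rcases le_total b c with h3|h3 <;>
    simp [min_def, max_def, h1, h2, h3] <;>
    first | tauto | (left; linarith) | (right; left; linarith) | (right; right; linarith)

lemma medR_eq_clamp (a b c : ℝ) : medR a b c = max (min b c) (min a (max b c)) := by
  unfold medR
  rcases le_total a b with h1|h1 <;> rcases le_total a c with h2|h2 <;>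
    rcases le_total b c with h3|h3 <;>
    simp [min_def, max_def, h1, h2, h3] <;> linarith

lemma medR_dichotomy {a a' : ℝ} (b c : ℝ) (h : a ≤ a') :
    medR a b c = medR a' b c ∨
    (a ≤ medR a b c ∧ medR a b c ≤ medR a' b c ∧ medR a' b c ≤ a') := by
  rw [medR_eq_clamp, medR_eq_clamp]
  set l := min b c with hl
  set u := max b c with hu
  have hlu : l ≤ u := min_le_max
  rcases le_total u a with h1|h1
  · left
    rw [min_eq_right h1, min_eq_right (h1.trans h)]
  · rcases le_total a' l with h2|h2
    · left
      rw [min_eq_left (h.trans (h2.trans hlu)), min_eq_left (h2.trans hlu),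
        max_eq_left (h.trans h2), max_eq_left h2]
    · right
      refine ⟨?_, ?_, ?_⟩
      · rw [min_eq_left h1]; exact le_max_right _ _
      · exact max_le_max le_rfl (min_le_min h le_rfl)
      · exact max_le h2 (min_le_left _ _)

/-- For a metric interval `X` (a metric space homeomorphic to a
nontrivial interval `J ⊆ ℝ`), the following are equivalent: (i) `X` has bounded
turning; (ii) `X` admits a Lipschitz mixer; (iii) `X` admits a symmetric Lipschitz
mixer. -/
theorem metric_interval_bounded_turning_iff_mixer_iff_symmetric_mixer
    (X : Type*) [MetricSpace X]
    (J : Set ℝ) (hJ_interval : J.OrdConnected) (hJ_nontrivial : J.Nontrivial)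
    (hX : Nonempty (X ≃ₜ J)) :
    List.TFAE
      [ -- (i) bounded turning
        (∃ C : ℝ, ∀ a b : X, ∃ E : Set X, a ∈ E ∧ b ∈ E ∧ IsCompact E ∧ IsConnected E ∧
          Metric.diam E ≤ C * dist a b),
        -- (ii) Lipschitz mixer
        (∃ L : ℝ, 0 ≤ L ∧ ∃ σ : X → X → X → X,
          (∀ a b : X, σ a a b = a ∧ σ a b a = a ∧ σ b a a = a) ∧
          (∀ a b c a' b' c' : X,
            dist (σ a b c) (σ a' b' c') ≤ L * (dist a a' + dist b b' + dist c c'))),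
        -- (iii) symmetric Lipschitz mixer
        (∃ L : ℝ, 0 ≤ L ∧ ∃ σ : X → X → X → X,
          (∀ a b : X, σ a a b = a ∧ σ a b a = a ∧ σ b a a = a) ∧
          (∀ a b c : X, σ a b c = σ b a c ∧ σ a b c = σ a c b) ∧
          (∀ a b c a' b' c' : X,
            dist (σ a b c) (σ a' b' c') ≤ L * (dist a a' + dist b b' + dist c c')))] := by
  obtain ⟨h⟩ := hX
  set f : X → ℝ := fun x => ((h x : J) : ℝ) with hf
  have hfJ : ∀ x, f x ∈ J := fun x => (h x).2
  have hfinj : Function.Injective f := fun x y hxy => h.injective (Subtype.ext hxy)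
  have hfcont : Continuous f := continuous_subtype_val.comp h.continuous
  have hsymmf : ∀ (x : X) (ht : f x ∈ J), h.symm ⟨f x, ht⟩ = x := by
    intro x ht
    have : (⟨f x, ht⟩ : J) = h x := Subtype.ext rfl
    rw [this, h.symm_apply_apply]
  have hfsymm : ∀ (t : ℝ) (ht : t ∈ J), f (h.symm ⟨t, ht⟩) = t := by
    intro t ht
    simp [hf]
  tfae_have 1 → 3 := by
    rintro ⟨C, hC⟩
    set C' := max C 0 with hC'def
    have hC'0 : (0:ℝ) ≤ C' := le_max_right _ _
    have hBT : ∀ a b : X, ∃ E : Set X, a ∈ E ∧ b ∈ E ∧ IsCompact E ∧ IsConnected E ∧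
        Metric.diam E ≤ C' * dist a b := by
      intro a b
      obtain ⟨E, h1, h2, h3, h4, h5⟩ := hC a b
      exact ⟨E, h1, h2, h3, h4,
        h5.trans (mul_le_mul_of_nonneg_right (le_max_left _ _) dist_nonneg)⟩
    have hmedJ : ∀ a b c : X, medR (f a) (f b) (f c) ∈ J := by
      intro a b c
      rcases medR_cases (f a) (f b) (f c) with hm|hm|hm <;> rw [hm] <;> apply hfJ
    set σ : X → X → X → X := fun a b c => h.symm ⟨medR (f a) (f b) (f c), hmedJ a b c⟩
      with hσdef
    have hfσ : ∀ a b c, f (σ a b c) = medR (f a) (f b) (f c) := fun a b c => hfsymm _ _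
    have hσeq : ∀ {a b c a' b' c' : X},
        medR (f a) (f b) (f c) = medR (f a') (f b') (f c') → σ a b c = σ a' b' c' := by
      intro a b c a' b' c' hm
      exact congrArg h.symm (Subtype.ext hm)
    have habs : ∀ a b : X, σ a a b = a ∧ σ a b a = a ∧ σ b a a = a := by
      intro a b
      have k : ∀ (p q r : X), medR (f p) (f q) (f r) = f a → σ p q r = a := by
        intro p q r hm
        have : σ p q r = h.symm ⟨f a, hfJ a⟩ := congrArg h.symm (Subtype.ext hm)
        rw [this, hsymmf]
      exact ⟨k a a b (medR_idem _ _), k a b a ((medR_comm2 _ _ _).trans (medR_idem _ _)),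
        k b a a (((medR_comm1 _ _ _).trans (medR_comm2 _ _ _)).trans (medR_idem _ _))⟩
    have hsym1 : ∀ a b c : X, σ a b c = σ b a c := fun a b c => hσeq (medR_comm1 _ _ _)
    have hsym2 : ∀ a b c : X, σ a b c = σ a c b := fun a b c => hσeq (medR_comm2 _ _ _)
    have key1 : ∀ a a' b c : X, f a ≤ f a' →
        dist (σ a b c) (σ a' b c) ≤ C' * dist a a' := by
      intro a a' b c hle
      rcases medR_dichotomy (f b) (f c) hle with heq | ⟨h1, h2, h3⟩
      · rw [hσeq heq, dist_self]
        exact mul_nonneg hC'0 dist_nonneg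
      · obtain ⟨E, haE, ha'E, hcomp, hconn, hdiam⟩ := hBT a a'
        have hSord : Set.OrdConnected (f '' E) :=
          (hconn.image f hfcont.continuousOn).isPreconnected.ordConnected
        have hm : medR (f a) (f b) (f c) ∈ f '' E :=
          hSord.out ⟨a, haE, rfl⟩ ⟨a', ha'E, rfl⟩ ⟨h1, h2.trans h3⟩
        have hm' : medR (f a') (f b) (f c) ∈ f '' E :=
          hSord.out ⟨a, haE, rfl⟩ ⟨a', ha'E, rfl⟩ ⟨h1.trans h2, h3⟩
        obtain ⟨x, hxE, hfx⟩ := hm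
        obtain ⟨y, hyE, hfy⟩ := hm'
        have hx : σ a b c = x := hfinj (by rw [hfσ, hfx])
        have hy : σ a' b c = y := hfinj (by rw [hfσ, hfy])
        rw [hx, hy]
        exact (Metric.dist_le_diam_of_mem hcomp.isBounded hxE hyE).trans hdiam
    have key : ∀ a a' b c : X, dist (σ a b c) (σ a' b c) ≤ C' * dist a a' := by
      intro a a' b c
      rcases le_total (f a) (f a') with hle|hle
      · exact key1 a a' b c hle
      · rw [dist_comm, dist_comm a a']
        exact key1 a' a b c hle
    refine ⟨C', hC'0, σ, habs, fun a b c => ⟨hsym1 a b c, hsym2 a b c⟩, ?_⟩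
    intro a b c a' b' c'
    have t1 : dist (σ a b c) (σ a' b c) ≤ C' * dist a a' := key _ _ _ _
    have t2 : dist (σ a' b c) (σ a' b' c) ≤ C' * dist b b' := by
      rw [hsym1 a' b c, hsym1 a' b' c]
      exact key _ _ _ _
    have t3 : dist (σ a' b' c) (σ a' b' c') ≤ C' * dist c c' := by
      rw [(hsym2 a' b' c).trans (hsym1 a' c b'), (hsym2 a' b' c').trans (hsym1 a' c' b')]
      exact key _ _ _ _
    calc dist (σ a b c) (σ a' b' c')
        ≤ dist (σ a b c) (σ a' b c) + dist (σ a' b c) (σ a' b' c) +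
            dist (σ a' b' c) (σ a' b' c') := dist_triangle4 _ _ _ _
      _ ≤ C' * (dist a a' + dist b b' + dist c c') := by
          rw [mul_add, mul_add]; linarith
  tfae_have 3 → 2 := by
    rintro ⟨L, hL, σ, habs, _, hlip⟩
    exact ⟨L, hL, σ, habs, hlip⟩
  tfae_have 2 → 1 := by
    rintro ⟨L, hL, σ, habs, hlip⟩
    refine ⟨2 * L, fun a b => ?_⟩
    have hsJ : Set.uIcc (f a) (f b) ⊆ J := hJ_interval.uIcc_subset (hfJ a) (hfJ b)
    set φ : Set.uIcc (f a) (f b) → X := fun t => σ a (h.symm ⟨t.1, hsJ t.2⟩) b with hφdef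
    have hσcont : Continuous (fun x => σ a x b) := by
      refine LipschitzWith.continuous (K := Real.toNNReal L) ?_
      refine LipschitzWith.of_dist_le_mul fun x y => ?_
      have := hlip a x b a y b
      simp only [dist_self] at this
      rw [Real.coe_toNNReal L hL]
      linarith
    have hφcont : Continuous φ :=
      hσcont.comp (h.symm.continuous.comp (Continuous.subtype_mk continuous_subtype_val _))
    haveI : CompactSpace (Set.uIcc (f a) (f b)) := isCompact_iff_compactSpace.mp isCompact_uIcc
    haveI : ConnectedSpace (Set.uIcc (f a) (f b)) :=
      Subtype.connectedSpace ⟨Set.nonempty_uIcc, isPreconnected_uIcc⟩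
    have haφ : a ∈ Set.range φ := by
      refine ⟨⟨f a, Set.left_mem_uIcc⟩, ?_⟩
      show σ a (h.symm ⟨f a, _⟩) b = a
      rw [hsymmf]
      exact (habs a b).1
    have hbφ : b ∈ Set.range φ := by
      refine ⟨⟨f b, Set.right_mem_uIcc⟩, ?_⟩
      show σ a (h.symm ⟨f b, _⟩) b = b
      rw [hsymmf]
      exact (habs b a).2.2
    refine ⟨Set.range φ, haφ, hbφ, isCompact_range hφcont, isConnected_range hφcont, ?_⟩
    refine Metric.diam_le_of_forall_dist_le (by positivity) ?_
    rintro x ⟨p, rfl⟩ y ⟨q, rfl⟩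
    have e1 : ∀ r : Set.uIcc (f a) (f b), dist (φ r) a ≤ L * dist a b := by
      intro r
      set z := h.symm ⟨r.1, hsJ r.2⟩ with hz
      have h2 := hlip a z b a z a
      rw [(habs a z).2.1] at h2
      simp only [dist_self, zero_add, add_zero] at h2
      calc dist (φ r) a = dist (σ a z b) a := rfl
        _ ≤ L * dist b a := h2
        _ = L * dist a b := by rw [dist_comm]
    have hp := e1 p
    have hq := e1 q
    calc dist (φ p) (φ q) ≤ dist (φ p) a + dist a (φ q) := dist_triangle _ _ _
      _ ≤ 2 * L * dist a b := by rw [dist_comm a (φ q)]; linarith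
  tfae_finish
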